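/- For all h, k ∈ ℝ^r, the mixed second directional derivative ∂²/∂s∂u [L(μ + s·h + u·k, Ψ)] evaluated at s = u = 0 equals (2/(ν + r))·∑_{n=1}^N w_n² (hᵀΨ⁻¹x̃_n)(x̃_nᵀΨ⁻¹k) − (∑_{n=1}^N w_n)·hᵀΨ⁻¹k; equivalently, the Hessian matrix of L with respect to μ equals (2/(ν + r))·Ψ⁻¹(∑_{n=1}^N w_n² x̃_n x̃_nᵀ)Ψ⁻¹ − (∑_{n=1}^N w_n)·Ψ⁻¹. -/

import Mathlib

open Matrix BigOperators

/-- The essential part of the log-likelihood of `N` observations from the multivariate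
`t_ν` distribution with location `μ` and scatter matrix `Ψ`. -/
noncomputable def tLogLik (r N : ℕ) (ν : ℝ) (x : Fin N → Fin r → ℝ)
    (μ : Fin r → ℝ) (Ψ : Matrix (Fin r) (Fin r) ℝ) : ℝ :=
  -((N : ℝ) / 2) * Real.log Ψ.det
    - ((ν + r) / 2) * ∑ n, Real.log (1 + ((x n - μ) ⬝ᵥ (Ψ⁻¹ *ᵥ (x n - μ))) / ν)

/-!
By the chain rule through `log`, the inner derivative at `u = 0` is the score
`kᵀ∇_μ L = (ν + r) ∑ₙ kᵀΨ⁻¹x̃ₙ / (ν + δₙ) = ∑ₙ wₙ kᵀΨ⁻¹x̃ₙ` at `μ + s • h`. The quotient rule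
then differentiates it in `s`, and the symmetry of `Ψ⁻¹` brings the result into the form with
the weights `wₙ`.
-/

theorem Matrix.IsSymm.dotProduct_mulVec_comm {α ι : Type*} [CommSemiring α] [Fintype ι]
    {A : Matrix ι ι α} (hA : A.IsSymm) (u v : ι → α) :
    u ⬝ᵥ (A *ᵥ v) = v ⬝ᵥ (A *ᵥ u) := by
  rw [dotProduct_mulVec, ← mulVec_transpose, hA, dotProduct_comm]

theorem Matrix.PosSemidef.isSymm {ι : Type*} [Fintype ι] {A : Matrix ι ι ℝ}
    (hA : A.PosSemidef) : A.IsSymm :=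
  (conjTranspose_eq_transpose_of_trivial A).symm.trans hA.isHermitian

theorem Matrix.PosSemidef.dotProduct_mulVec_self_nonneg {ι : Type*} [Fintype ι]
    {A : Matrix ι ι ℝ} (hA : A.PosSemidef) (v : ι → ℝ) : 0 ≤ v ⬝ᵥ (A *ᵥ v) := by
  simpa using hA.dotProduct_mulVec_nonneg v

section Calculus

variable {𝕜 ι : Type*} [NontriviallyNormedField 𝕜] [Fintype ι]
  {f g : 𝕜 → ι → 𝕜} {f' g' : ι → 𝕜} {t : 𝕜}

theorem HasDerivAt.dotProduct (hf : HasDerivAt f f' t) (hg : HasDerivAt g g' t) :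
    HasDerivAt (fun t => f t ⬝ᵥ g t) (f' ⬝ᵥ g t + f t ⬝ᵥ g') t := by
  have hsum := HasDerivAt.fun_sum (u := Finset.univ) fun i _ =>
    (hasDerivAt_pi.1 hf i).fun_mul (hasDerivAt_pi.1 hg i)
  rw [Finset.sum_add_distrib] at hsum
  exact hsum

theorem HasDerivAt.mulVec (A : Matrix ι ι 𝕜) (hf : HasDerivAt f f' t) :
    HasDerivAt (fun t => A *ᵥ f t) (A *ᵥ f') t :=
  hasDerivAt_pi.2 fun i => by
    have h := (hasDerivAt_const t (A i)).dotProduct hf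
    rw [zero_dotProduct, zero_add] at h
    exact h

theorem hasDerivAt_sub_smul (v d : ι → 𝕜) (t : 𝕜) :
    HasDerivAt (fun t => v - t • d) (-d) t := by
  simpa using ((hasDerivAt_id t).smul_const d).const_sub v

theorem hasDerivAt_dotProduct_mulVec_sub_smul (A : Matrix ι ι 𝕜) (k v d : ι → 𝕜) (t : 𝕜) :
    HasDerivAt (fun t => k ⬝ᵥ (A *ᵥ (v - t • d))) (-(k ⬝ᵥ (A *ᵥ d))) t := by
  have h := (hasDerivAt_const t k).dotProduct ((hasDerivAt_sub_smul v d t).mulVec A)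
  rwa [zero_dotProduct, zero_add, mulVec_neg, dotProduct_neg] at h

theorem hasDerivAt_quadForm_sub_smul {A : Matrix ι ι 𝕜} (hA : A.IsSymm) (v d : ι → 𝕜) (t : 𝕜) :
    HasDerivAt (fun t => (v - t • d) ⬝ᵥ (A *ᵥ (v - t • d)))
      (-2 * (d ⬝ᵥ (A *ᵥ (v - t • d)))) t := by
  have hline := hasDerivAt_sub_smul v d t
  refine (hline.dotProduct (hline.mulVec A)).congr_deriv ?_
  rw [mulVec_neg, dotProduct_neg, neg_dotProduct, hA.dotProduct_mulVec_comm (v - t • d)]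
  ring

end Calculus

section LogQuadForm

variable {ι : Type*} [Fintype ι] {A : Matrix ι ι ℝ} {ν : ℝ}

theorem hasDerivAt_log_one_add_quadForm_sub_smul (hA : A.PosSemidef) (hν : 0 < ν)
    (v d : ι → ℝ) (t : ℝ) :
    HasDerivAt (fun t => Real.log (1 + (v - t • d) ⬝ᵥ (A *ᵥ (v - t • d)) / ν))
      (-2 * (d ⬝ᵥ (A *ᵥ (v - t • d))) / (ν + (v - t • d) ⬝ᵥ (A *ᵥ (v - t • d)))) t := by
  have hq := hA.dotProduct_mulVec_self_nonneg (v - t • d)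
  refine (((hasDerivAt_quadForm_sub_smul hA.isSymm v d t).div_const ν).const_add 1).log
    (by positivity) |>.congr_deriv ?_
  field_simp

theorem hasDerivAt_dotProduct_mulVec_div_quadForm_sub_smul (hA : A.PosSemidef) (hν : 0 < ν)
    (k v d : ι → ℝ) (t : ℝ) :
    HasDerivAt (fun t => k ⬝ᵥ (A *ᵥ (v - t • d)) / (ν + (v - t • d) ⬝ᵥ (A *ᵥ (v - t • d))))
      ((2 * (d ⬝ᵥ (A *ᵥ (v - t • d))) * (k ⬝ᵥ (A *ᵥ (v - t • d)))
          - (k ⬝ᵥ (A *ᵥ d)) * (ν + (v - t • d) ⬝ᵥ (A *ᵥ (v - t • d))))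
        / (ν + (v - t • d) ⬝ᵥ (A *ᵥ (v - t • d))) ^ 2) t := by
  have hq := hA.dotProduct_mulVec_self_nonneg (v - t • d)
  refine ((hasDerivAt_dotProduct_mulVec_sub_smul A k v d t).div
    ((hasDerivAt_quadForm_sub_smul hA.isSymm v d t).const_add ν) (by positivity)).congr_deriv ?_
  ring

end LogQuadForm

noncomputable def tLocationScore (r N : ℕ) (ν : ℝ) (x : Fin N → Fin r → ℝ)
    (μ : Fin r → ℝ) (Ψ : Matrix (Fin r) (Fin r) ℝ) (k : Fin r → ℝ) : ℝ :=
  (ν + r) * ∑ n, k ⬝ᵥ (Ψ⁻¹ *ᵥ (x n - μ)) / (ν + (x n - μ) ⬝ᵥ (Ψ⁻¹ *ᵥ (x n - μ)))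

section TLikelihood

variable {r N : ℕ} {ν : ℝ} {x : Fin N → Fin r → ℝ} {Ψ : Matrix (Fin r) (Fin r) ℝ}

theorem hasDerivAt_tLogLik_add_smul (hν : 0 < ν) (hΨ : Ψ.PosDef) (μ k : Fin r → ℝ) :
    HasDerivAt (fun u : ℝ => tLogLik r N ν x (μ + u • k) Ψ) (tLocationScore r N ν x μ Ψ k) 0 := by
  have hsum := HasDerivAt.fun_sum (u := Finset.univ) fun n _ =>
    hasDerivAt_log_one_add_quadForm_sub_smul hΨ.inv.posSemidef hν (x n - μ) k 0
  simp only [zero_smul, sub_zero] at hsum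
  simp only [tLogLik, sub_add_eq_sub_sub]
  refine ((hsum.const_mul ((ν + r) / 2)).const_sub _).congr_deriv ?_
  rw [tLocationScore, Finset.mul_sum, Finset.mul_sum, ← Finset.sum_neg_distrib]
  refine Finset.sum_congr rfl fun n _ => ?_
  ring

theorem hasDerivAt_tLocationScore_add_smul (hν : 0 < ν) (hΨ : Ψ.PosDef) (μ h k : Fin r → ℝ) :
    HasDerivAt (fun s : ℝ => tLocationScore r N ν x (μ + s • h) Ψ k)
      ((ν + r) * ∑ n, (2 * (h ⬝ᵥ (Ψ⁻¹ *ᵥ (x n - μ))) * (k ⬝ᵥ (Ψ⁻¹ *ᵥ (x n - μ)))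
          - (k ⬝ᵥ (Ψ⁻¹ *ᵥ h)) * (ν + (x n - μ) ⬝ᵥ (Ψ⁻¹ *ᵥ (x n - μ))))
        / (ν + (x n - μ) ⬝ᵥ (Ψ⁻¹ *ᵥ (x n - μ))) ^ 2) 0 := by
  have hsum := HasDerivAt.fun_sum (u := Finset.univ) fun n _ =>
    hasDerivAt_dotProduct_mulVec_div_quadForm_sub_smul hΨ.inv.posSemidef hν k (x n - μ) h 0
  simp only [zero_smul, sub_zero] at hsum
  simp only [tLocationScore, sub_add_eq_sub_sub]
  exact hsum.const_mul _

end TLikelihood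

theorem mixed_second_deriv_location_general
    (r N : ℕ) (ν : ℝ) (hν : 0 < ν)
    (x : Fin N → Fin r → ℝ) (μ : Fin r → ℝ)
    (Ψ : Matrix (Fin r) (Fin r) ℝ) (hΨ : Ψ.PosDef)
    (δ : Fin N → ℝ)
    (hδ : ∀ n, δ n = (x n - μ) ⬝ᵥ (Ψ⁻¹ *ᵥ (x n - μ)))
    (w : Fin N → ℝ)
    (hw : ∀ n, w n = (ν + r) / (ν + δ n))
    (h k : Fin r → ℝ) :
    deriv (fun s : ℝ =>
        deriv (fun u : ℝ => tLogLik r N ν x (μ + s • h + u • k) Ψ) 0) 0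
      = (2 / (ν + r)) * ∑ n, (w n) ^ 2 *
            (h ⬝ᵥ (Ψ⁻¹ *ᵥ (x n - μ))) * ((x n - μ) ⬝ᵥ (Ψ⁻¹ *ᵥ k))
        - (∑ n, w n) * (h ⬝ᵥ (Ψ⁻¹ *ᵥ k)) := by
  have hscore : (fun s : ℝ => deriv (fun u : ℝ => tLogLik r N ν x (μ + s • h + u • k) Ψ) 0)
      = fun s => tLocationScore r N ν x (μ + s • h) Ψ k :=
    funext fun s => (hasDerivAt_tLogLik_add_smul hν hΨ _ k).deriv
  rw [hscore, (hasDerivAt_tLocationScore_add_smul hν hΨ μ h k).deriv]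
  have hsymm := hΨ.inv.posSemidef.isSymm
  rw [Finset.mul_sum, Finset.mul_sum, Finset.sum_mul, ← Finset.sum_sub_distrib]
  refine Finset.sum_congr rfl fun n _ => ?_
  have hδn : 0 ≤ δ n := hδ n ▸ hΨ.inv.posSemidef.dotProduct_mulVec_self_nonneg (x n - μ)
  rw [hw, ← hδ, hsymm.dotProduct_mulVec_comm k, hsymm.dotProduct_mulVec_comm k]
  field_simp

/-- the mixed second directional derivative of `L(·, Ψ)` at `μ` in the
directions `h, k` equals
`(2/(ν+r))·∑ₙ wₙ² (hᵀΨ⁻¹x̃ₙ)(x̃ₙᵀΨ⁻¹k) − (∑ₙ wₙ)·hᵀΨ⁻¹k`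
(the μ–μ block of the Fisher information matrix). -/
theorem mixed_second_deriv_location
    (r N : ℕ) (hr : 1 ≤ r) (hN : 1 ≤ N) (ν : ℝ) (hν : 0 < ν)
    (x : Fin N → Fin r → ℝ) (μ : Fin r → ℝ)
    (Ψ : Matrix (Fin r) (Fin r) ℝ) (hΨ : Ψ.PosDef)
    (δ : Fin N → ℝ)
    (hδ : ∀ n, δ n = (x n - μ) ⬝ᵥ (Ψ⁻¹ *ᵥ (x n - μ)))
    (w : Fin N → ℝ)
    (hw : ∀ n, w n = (ν + r) / (ν + δ n))
    (h k : Fin r → ℝ) :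
    deriv (fun s : ℝ =>
        deriv (fun u : ℝ => tLogLik r N ν x (μ + s • h + u • k) Ψ) 0) 0
      = (2 / (ν + r)) * ∑ n, (w n) ^ 2 *
            (h ⬝ᵥ (Ψ⁻¹ *ᵥ (x n - μ))) * ((x n - μ) ⬝ᵥ (Ψ⁻¹ *ᵥ k))
        - (∑ n, w n) * (h ⬝ᵥ (Ψ⁻¹ *ᵥ k)) :=
  mixed_second_deriv_location_general r N ν hν x μ Ψ hΨ δ hδ w hw h k
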